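/- There is no proper assignment of color sets to the vertices of C18(3,4) in which vertex 1 receives two colors from {1,2,3} and every other vertex receives one color from {1,2,3}, where properness means adjacent vertices receive disjoint color sets. Equivalently: in every proper 3-coloring of C18(3,4) and for every vertex v and every color a ≠ c(v), some neighbor of v has color a. -/
import Mathlib


def C18 : SimpleGraph (ZMod 18) :=
  SimpleGraph.fromRel (fun i j => i - j = 3 ∨ i - j = 4)

def Proper3 (c : ZMod 18 → Fin 3) : Prop :=
  ∀ i j : ZMod 18, C18.Adj i j → c i ≠ c j

set_option maxHeartbeats 2000000 in
set_option synthInstance.maxHeartbeats 400000 in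
set_option synthInstance.maxSize 2000 in
private lemma key : ∀ x0 x1 x2 x3 : Fin 3, x0 ≠ x3 →
    ∀ x4, x1 ≠ x4 → x0 ≠ x4 → x3 = x4 →
    ∀ x5, x2 ≠ x5 → x1 ≠ x5 →
    ∀ x6, x3 ≠ x6 → x2 ≠ x6 →
    ∀ x7, x4 ≠ x7 → x3 ≠ x7 →
    ∀ x8, x5 ≠ x8 → x4 ≠ x8 →
    ∀ x9, x6 ≠ x9 → x5 ≠ x9 →
    ∀ x10, x7 ≠ x10 → x6 ≠ x10 →
    ∀ x11, x8 ≠ x11 → x7 ≠ x11 →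
    ∀ x12, x9 ≠ x12 → x8 ≠ x12 →
    ∀ x13, x10 ≠ x13 → x9 ≠ x13 →
    ∀ x14, x11 ≠ x14 → x10 ≠ x14 → x3 = x14 →
    ∀ x15, x12 ≠ x15 → x11 ≠ x15 → x3 = x15 →
    ∀ x16, x13 ≠ x16 → x12 ≠ x16 →
    ∀ x17, x14 ≠ x17 → x13 ≠ x17 →
    x15 ≠ x0 → x16 ≠ x1 → x17 ≠ x2 →
    x14 ≠ x0 → x15 ≠ x1 → x16 ≠ x2 → x17 ≠ x3 → False := by decide

private lemma adj_iff (i j : ZMod 18) :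
    C18.Adj i j ↔ (i - j = 3 ∨ i - j = 4 ∨ j - i = 3 ∨ j - i = 4) := by
  simp only [C18, SimpleGraph.fromRel_adj]
  constructor
  · rintro ⟨-, h⟩; tauto
  · intro h
    refine ⟨?_, by tauto⟩
    rintro rfl
    simp only [sub_self] at h
    rcases h with h | h | h | h <;> exact absurd h (by decide)

private lemma key' (c : ZMod 18 → Fin 3) (hc : Proper3 c)
    (h1 : c 3 = c 4) (h2 : c 3 = c 14) (h3 : c 3 = c 15) : False := by
  have A : ∀ i j : ZMod 18, (i - j = 3 ∨ i - j = 4 ∨ j - i = 3 ∨ j - i = 4) →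
      c i ≠ c j := fun i j h => hc i j ((adj_iff i j).mpr h)
  exact key (c 0) (c 1) (c 2) (c 3) (A 0 3 (by decide))
    (c 4) (A 1 4 (by decide)) (A 0 4 (by decide)) h1
    (c 5) (A 2 5 (by decide)) (A 1 5 (by decide))
    (c 6) (A 3 6 (by decide)) (A 2 6 (by decide))
    (c 7) (A 4 7 (by decide)) (A 3 7 (by decide))
    (c 8) (A 5 8 (by decide)) (A 4 8 (by decide))
    (c 9) (A 6 9 (by decide)) (A 5 9 (by decide))
    (c 10) (A 7 10 (by decide)) (A 6 10 (by decide))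
    (c 11) (A 8 11 (by decide)) (A 7 11 (by decide))
    (c 12) (A 9 12 (by decide)) (A 8 12 (by decide))
    (c 13) (A 10 13 (by decide)) (A 9 13 (by decide))
    (c 14) (A 11 14 (by decide)) (A 10 14 (by decide)) h2
    (c 15) (A 12 15 (by decide)) (A 11 15 (by decide)) h3
    (c 16) (A 13 16 (by decide)) (A 12 16 (by decide))
    (c 17) (A 14 17 (by decide)) (A 13 17 (by decide))
    (A 15 0 (by decide)) (A 16 1 (by decide)) (A 17 2 (by decide))
    (A 14 0 (by decide)) (A 15 1 (by decide)) (A 16 2 (by decide))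
    (A 17 3 (by decide))

private lemma fin3 : ∀ a b x y : Fin 3, a ≠ b → x ≠ a → x ≠ b → y ≠ a → y ≠ b →
    x = y := by decide

private lemma part2 : ∀ c : ZMod 18 → Fin 3, Proper3 c →
    ∀ (v : ZMod 18) (a : Fin 3), a ≠ c v → ∃ j : ZMod 18, C18.Adj v j ∧ c j = a := by
  intro c hc v a ha
  by_contra h
  push_neg at h
  set c' : ZMod 18 → Fin 3 := fun i => c (v + i) with hc'
  have hc'p : Proper3 c' := by
    intro i j hij
    apply hc
    rw [adj_iff] at hij ⊢
    simpa [add_sub_add_left_eq_sub] using hij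
  have hadj : ∀ k : ZMod 18, (k = 3 ∨ k = 4 ∨ k = 14 ∨ k = 15) → C18.Adj v (v + k) := by
    intro k hk
    rw [adj_iff]
    rcases hk with rfl | rfl | rfl | rfl
    · right; right; left; simp [add_sub_cancel_left]
    · right; right; right; simp [add_sub_cancel_left]
    · right; left; rw [show (4:ZMod 18) = -14 by decide]; ring
    · left; rw [show (3:ZMod 18) = -15 by decide]; ring
  have hnb : ∀ k : ZMod 18, (k = 3 ∨ k = 4 ∨ k = 14 ∨ k = 15) →
      c' k ≠ a ∧ c' k ≠ c' 0 := by
    intro k hk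
    have hA := hadj k hk
    constructor
    · exact h (v + k) hA
    · have := hc v (v + k) hA
      simpa [hc', add_zero] using this.symm
  have h0 : a ≠ c' 0 := by simpa [hc'] using ha
  have e1 : c' 3 = c' 4 := fin3 a (c' 0) _ _ h0 (hnb 3 (by tauto)).1 (hnb 3 (by tauto)).2
      (hnb 4 (by tauto)).1 (hnb 4 (by tauto)).2
  have e2 : c' 3 = c' 14 := fin3 a (c' 0) _ _ h0 (hnb 3 (by tauto)).1 (hnb 3 (by tauto)).2
      (hnb 14 (by tauto)).1 (hnb 14 (by tauto)).2
  have e3 : c' 3 = c' 15 := fin3 a (c' 0) _ _ h0 (hnb 3 (by tauto)).1 (hnb 3 (by tauto)).2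
      (hnb 15 (by tauto)).1 (hnb 15 (by tauto)).2
  exact key' c' hc'p e1 e2 e3

/-- There is no proper set-coloring of C18(3,4) in which vertex 1 gets two colors
from {1,2,3} and every other vertex gets one; equivalently, in every proper
3-coloring, every vertex sees both other colors among its neighbors. -/
theorem stmt_8 :
    (¬ ∃ S : ZMod 18 → Finset (Fin 3),
        (S 1).card = 2 ∧ (∀ v : ZMod 18, v ≠ 1 → (S v).card = 1) ∧
        (∀ i j : ZMod 18, C18.Adj i j → Disjoint (S i) (S j))) ∧
    (∀ c : ZMod 18 → Fin 3, Proper3 c →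
      ∀ (v : ZMod 18) (a : Fin 3), a ≠ c v → ∃ j : ZMod 18, C18.Adj v j ∧ c j = a) := by
  refine ⟨?_, part2⟩
  rintro ⟨S, h1, hrest, hdisj⟩
  have hne : ∀ v : ZMod 18, (S v).Nonempty := by
    intro v
    rw [← Finset.card_pos]
    rcases eq_or_ne v 1 with rfl | hv
    · omega
    · rw [hrest v hv]; omega
  set c : ZMod 18 → Fin 3 := fun v => (hne v).choose with hcdef
  have hmem : ∀ v, c v ∈ S v := fun v => (hne v).choose_spec
  have hcp : Proper3 c := by
    intro i j hij heq
    exact Finset.disjoint_left.mp (hdisj i j hij) (hmem i) (heq ▸ hmem j)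
  obtain ⟨a, haS, hane⟩ := Finset.exists_mem_ne (s := S 1) (by omega) (c 1)
  obtain ⟨j, hj, hcj⟩ := part2 c hcp 1 a hane
  exact Finset.disjoint_left.mp (hdisj 1 j hj) haS (hcj ▸ hmem j)
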